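/- arXiv:2106.12689 — 2 statements merged into one kernel-verified Lean document; each statement's English description precedes it below -/
import Mathlib

section
/- CVaR is subadditive: for integrable random variables X, Y and α ∈ [0,1), CVaR_α(X + Y) ≤ CVaR_α(X) + CVaR_α(Y). -/
open MeasureTheory

lemma cvar_bddBelow
    {Ω : Type*} [MeasurableSpace Ω] (μ : Measure Ω) [IsProbabilityMeasure μ]
    (Z : Ω → ℝ) (hZ : Integrable Z μ) (α : ℝ) (hα0 : 0 ≤ α) (hα1 : α < 1) :
    BddBelow (Set.range (fun fhat : ℝ => fhat + (1 - α)⁻¹ * ∫ ω, max (Z ω - fhat) 0 ∂μ)) := by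
  have hc : (0:ℝ) < 1 - α := by linarith
  refine ⟨min 0 ((1 - α)⁻¹ * ∫ ω, Z ω ∂μ), ?_⟩
  rintro _ ⟨f, rfl⟩
  have hint : Integrable (fun ω => max (Z ω - f) 0) μ := (hZ.sub (integrable_const f)).pos_part
  have h0 : 0 ≤ ∫ ω, max (Z ω - f) 0 ∂μ :=
    integral_nonneg fun ω => le_max_right _ _
  rcases le_or_gt 0 f with hf | hf
  · refine le_trans (min_le_left _ _) ?_
    have : (0:ℝ) ≤ (1 - α)⁻¹ * ∫ ω, max (Z ω - f) 0 ∂μ :=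
      mul_nonneg (by positivity) h0
    linarith
  · refine le_trans (min_le_right _ _) ?_
    have hmono : ∫ ω, Z ω - f ∂μ ≤ ∫ ω, max (Z ω - f) 0 ∂μ :=
      integral_mono (hZ.sub (integrable_const f)) hint fun ω => le_max_left _ _
    have heq : ∫ ω, Z ω - f ∂μ = (∫ ω, Z ω ∂μ) - f := by
      rw [integral_sub hZ (integrable_const f), integral_const]
      simp
    have hinv1 : (1:ℝ) ≤ (1 - α)⁻¹ := by
      rw [le_inv_comm₀ one_pos hc]; linarith
    have h2 : (1 - α)⁻¹ * ((∫ ω, Z ω ∂μ) - f) ≤ (1 - α)⁻¹ * ∫ ω, max (Z ω - f) 0 ∂μ := by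
      apply mul_le_mul_of_nonneg_left _ (by positivity)
      rw [← heq]; exact hmono
    nlinarith [mul_nonneg (neg_nonneg.mpr hf.le) (sub_nonneg.mpr hinv1)]

theorem cvar_subadditive
    {Ω : Type*} [MeasurableSpace Ω] (μ : Measure Ω) [IsProbabilityMeasure μ]
    (X Y : Ω → ℝ) (hX : Integrable X μ) (hY : Integrable Y μ)
    (α : ℝ) (hα0 : 0 ≤ α) (hα1 : α < 1) :
    (⨅ fhat : ℝ, fhat + (1 - α)⁻¹ * ∫ ω, max ((X ω + Y ω) - fhat) 0 ∂μ)
      ≤ (⨅ fhat : ℝ, fhat + (1 - α)⁻¹ * ∫ ω, max (X ω - fhat) 0 ∂μ)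
        + (⨅ fhat : ℝ, fhat + (1 - α)⁻¹ * ∫ ω, max (Y ω - fhat) 0 ∂μ) := by
  have hc : (0:ℝ) < 1 - α := by linarith
  refine le_ciInf_add_ciInf fun a b => ?_
  have hXY : Integrable (fun ω => X ω + Y ω) μ := hX.add hY
  have hintX : Integrable (fun ω => max (X ω - a) 0) μ := (hX.sub (integrable_const a)).pos_part
  have hintY : Integrable (fun ω => max (Y ω - b) 0) μ := (hY.sub (integrable_const b)).pos_part
  have h1 : (⨅ fhat : ℝ, fhat + (1 - α)⁻¹ * ∫ ω, max ((X ω + Y ω) - fhat) 0 ∂μ)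
      ≤ (a + b) + (1 - α)⁻¹ * ∫ ω, max ((X ω + Y ω) - (a + b)) 0 ∂μ :=
    ciInf_le (cvar_bddBelow μ _ hXY α hα0 hα1) (a + b)
  refine h1.trans ?_
  have hptw : ∀ ω, max ((X ω + Y ω) - (a + b)) 0 ≤ max (X ω - a) 0 + max (Y ω - b) 0 := by
    intro ω
    refine max_le ?_ (by positivity)
    have : X ω + Y ω - (a + b) = (X ω - a) + (Y ω - b) := by ring
    rw [this]
    exact add_le_add (le_max_left _ _) (le_max_left _ _)
  have hmono : ∫ ω, max ((X ω + Y ω) - (a + b)) 0 ∂μ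
      ≤ (∫ ω, max (X ω - a) 0 ∂μ) + ∫ ω, max (Y ω - b) 0 ∂μ := by
    rw [← integral_add hintX hintY]
    exact integral_mono ((hXY.sub (integrable_const (a+b))).pos_part) (hintX.add hintY) hptw
  have := mul_le_mul_of_nonneg_left hmono (le_of_lt (inv_pos.mpr hc))
  linarith
end

section
/- For a real random variable X with continuous distribution function and α ∈ (0,1), the infimum in CVaR_α(X) = inf_{f̂} { f̂ + (1−α)⁻¹ E[(X − f̂)⁺] } is attained at any α-quantile q_α of X, i.e., any f̂ with P(X ≤ f̂) = α minimizes the objective. -/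
open MeasureTheory

theorem cvar_attained_at_quantile
    {Ω : Type*} [MeasurableSpace Ω] (μ : Measure Ω) [IsProbabilityMeasure μ]
    (X : Ω → ℝ) (hX : Integrable X μ) (hXm : Measurable X)
    (hF : Continuous (fun x : ℝ => (μ {ω | X ω ≤ x}).toReal))
    (α : ℝ) (hα0 : 0 < α) (hα1 : α < 1)
    (q : ℝ) (hq : (μ {ω | X ω ≤ q}).toReal = α) :
    ∀ fhat : ℝ,
      q + (1 - α)⁻¹ * ∫ ω, max (X ω - q) 0 ∂μ
        ≤ fhat + (1 - α)⁻¹ * ∫ ω, max (X ω - fhat) 0 ∂μ := by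
  intro f
  have hc : (0:ℝ) < 1 - α := by linarith
  have hcinv : (1 - α)⁻¹ * (1 - α) = 1 := inv_mul_cancel₀ (ne_of_gt hc)
  have hcinvpos : (0:ℝ) < (1 - α)⁻¹ := inv_pos.mpr hc
  have hint : ∀ a : ℝ, Integrable (fun ω => max (X ω - a) 0) μ := fun a =>
    (hX.sub (integrable_const a)).pos_part
  have hmeasIic : MeasurableSet {ω | X ω ≤ q} := hXm measurableSet_Iic
  have hmeasIoi : MeasurableSet {ω | q < X ω} := hXm measurableSet_Ioi
  have hmeasIci : MeasurableSet {ω | q ≤ X ω} := hXm measurableSet_Ici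
  have hcompl : {ω | q < X ω} = {ω | X ω ≤ q}ᶜ := by ext ω; simp [not_le]
  have hμIoi : (μ {ω | q < X ω}).toReal = 1 - α := by
    rw [hcompl, prob_compl_eq_one_sub hmeasIic,
      ENNReal.toReal_sub_of_le prob_le_one ENNReal.one_ne_top, ENNReal.toReal_one, hq]
  have hμIci : 1 - α ≤ (μ {ω | q ≤ X ω}).toReal := by
    rw [← hμIoi]
    exact ENNReal.toReal_mono (measure_ne_top μ _)
      (measure_mono (fun ω (hω : q < X ω) => le_of_lt hω))
  rcases le_total q f with h | h
  · -- q ≤ f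
    have key : ∫ ω, max (X ω - q) 0 ∂μ - ∫ ω, max (X ω - f) 0 ∂μ ≤ (f - q) * (1 - α) := by
      rw [← integral_sub (hint q) (hint f)]
      have hind : Integrable ({ω | q < X ω}.indicator (fun _ => f - q)) μ :=
        (integrable_indicator_iff hmeasIoi).mpr (integrable_const _).integrableOn
      calc ∫ ω, (max (X ω - q) 0 - max (X ω - f) 0) ∂μ
          ≤ ∫ ω, {ω | q < X ω}.indicator (fun _ => f - q) ω ∂μ := by
            apply integral_mono ((hint q).sub (hint f)) hind
            intro ω
            simp only [Pi.sub_apply, Set.indicator, Set.mem_setOf_eq]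
            split_ifs with hω
            · have h1 : X ω - q ≤ f - q + max (X ω - f) 0 := by
                have := le_max_left (X ω - f) 0; linarith
              have h2 : (0:ℝ) ≤ f - q + max (X ω - f) 0 := by
                have := le_max_right (X ω - f) 0; linarith
              have := max_le h1 h2
              linarith
            · have h1 : max (X ω - q) 0 = 0 := max_eq_right (by push_neg at hω; linarith)
              have := le_max_right (X ω - f) 0
              linarith
        _ = (f - q) * (1 - α) := by
            rw [integral_indicator_const _ hmeasIoi, measureReal_def, hμIoi, smul_eq_mul, mul_comm]
    have := mul_le_mul_of_nonneg_left key (le_of_lt hcinvpos)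
    nlinarith [this]
  · -- f ≤ q
    have key : (q - f) * (1 - α) ≤ ∫ ω, max (X ω - f) 0 ∂μ - ∫ ω, max (X ω - q) 0 ∂μ := by
      rw [← integral_sub (hint f) (hint q)]
      have hind : Integrable ({ω | q ≤ X ω}.indicator (fun _ => q - f)) μ :=
        (integrable_indicator_iff hmeasIci).mpr (integrable_const _).integrableOn
      have step1 : (q - f) * (1 - α) ≤ ∫ ω, {ω | q ≤ X ω}.indicator (fun _ => q - f) ω ∂μ := by
        rw [integral_indicator_const _ hmeasIci, smul_eq_mul, mul_comm]
        exact mul_le_mul_of_nonneg_right hμIci (sub_nonneg.mpr h)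
      refine le_trans step1 ?_
      apply integral_mono hind ((hint f).sub (hint q))
      intro ω
      simp only [Pi.sub_apply, Set.indicator, Set.mem_setOf_eq]
      split_ifs with hω
      · have h1 : max (X ω - q) 0 = X ω - q := max_eq_left (by linarith)
        have h2 : max (X ω - f) 0 = X ω - f := max_eq_left (by linarith)
        rw [h1, h2]; linarith
      · have h1 : max (X ω - q) 0 ≤ max (X ω - f) 0 :=
          max_le_max (by linarith) le_rfl
        linarith
    have := mul_le_mul_of_nonneg_left key (le_of_lt hcinvpos)
    nlinarith [this]
end
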